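/- Let $p \in (1, 2)$, $K \geq 0$, and $\varepsilon > 0$ with $\vartheta(\varepsilon, p) = \sqrt{\tfrac{1}{2}(\tfrac{p-1}{2\varepsilon})^{2/(2-p)} + \tfrac{1}{2}} - 1$. For $t \in \mathbb{R}$ and $\tau^2 \geq 0$ with $(t^2 + \tau^2)^{1/2} < \vartheta(\varepsilon, p)$ and $\varepsilon < \tfrac{p-1}{2}$, it holds that $\left((1+t)^2 + \tau^2\right)^{p/2} - 1 - pt \geq p\varepsilon(t^2 + \tau^2)$. -/

import Mathlib

/-!
Put `w = (t, √q)` and `v(s) = (1, 0) + s • w`. If `r` bounds `‖w‖` then `‖v(s)‖ ≤ 1 + r`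
on `[0, 1]`, and since `p ≤ 2` the second derivative of `s ↦ ‖v(s)‖ ^ p` is at least
`p (p - 1) (1 + r) ^ (p - 2) ‖w‖²`. Taylor's formula with this lower bound gives the
inequality with constant `p (p - 1) (1 + r) ^ (p - 2) / 2`, and for `r = ϑ(ε, p)` this
constant is at least `p ε`.
-/

open Real Set Filter Topology

theorem add_deriv_mul_add_le_of_le_deriv2 {f f' f'' : ℝ → ℝ} {a b C : ℝ} (hab : a ≤ b)
    (hf : ∀ x ∈ Icc a b, HasDerivAt f (f' x) x)
    (hf' : ∀ x ∈ Icc a b, HasDerivAt f' (f'' x) x)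
    (hC : ∀ x ∈ Ioo a b, C ≤ f'' x) :
    f a + f' a * (b - a) + C / 2 * (b - a) ^ 2 ≤ f b := by
  have hd₁ : ∀ x ∈ Icc a b, HasDerivAt (fun x => f' x - C * x) (f'' x - C) x := fun x hx =>
    ((hf' x hx).sub ((hasDerivAt_id' x).const_mul C)).congr_deriv (by ring)
  have hmono₁ : MonotoneOn (fun x => f' x - C * x) (Icc a b) := by
    refine monotoneOn_of_hasDerivWithinAt_nonneg (convex_Icc a b) (HasDerivAt.continuousOn hd₁)
      (fun x hx => (hd₁ x (interior_subset hx)).hasDerivWithinAt) fun x hx => ?_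
    rw [interior_Icc] at hx
    exact sub_nonneg.2 (hC x hx)
  have hd₂ : ∀ x ∈ Icc a b, HasDerivAt (fun x => f x - f' a * x - C / 2 * (x - a) ^ 2)
      (f' x - f' a - C * (x - a)) x := fun x hx => by
    have h := (((hasDerivAt_id' x).sub_const a).pow 2).const_mul (C / 2)
    exact (((hf x hx).sub ((hasDerivAt_id' x).const_mul (f' a))).sub h).congr_deriv
      (by norm_num; ring)
  have hmono₂ : MonotoneOn (fun x => f x - f' a * x - C / 2 * (x - a) ^ 2) (Icc a b) := by
    refine monotoneOn_of_hasDerivWithinAt_nonneg (convex_Icc a b) (HasDerivAt.continuousOn hd₂)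
      (fun x hx => (hd₂ x (interior_subset hx)).hasDerivWithinAt) fun x hx => ?_
    have := hmono₁ (left_mem_Icc.2 hab) (interior_subset hx) (interior_subset hx).1
    simp only at this
    linarith
  have := hmono₂ (left_mem_Icc.2 hab) (right_mem_Icc.2 hab) hab
  norm_num at this
  linarith

/-- `‖v(s)‖²` and `⟪w, v(s)⟫` for `w = (t, √q)` and `v(s) = (1, 0) + s • w`. -/
def segmentNormSq (t q s : ℝ) : ℝ := (1 + s * t) ^ 2 + q * s ^ 2

def segmentInner (t q s : ℝ) : ℝ := t * (1 + s * t) + q * s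

section Segment

variable (t q : ℝ)

lemma segmentNormSq_pos (hq : 0 < q) (s : ℝ) : 0 < segmentNormSq t q s := by
  rcases eq_or_ne s 0 with rfl | hs
  · simp [segmentNormSq]
  · unfold segmentNormSq; positivity

lemma hasDerivAt_segmentNormSq (s : ℝ) :
    HasDerivAt (segmentNormSq t q) (2 * segmentInner t q s) s := by
  have h := ((((hasDerivAt_id' s).mul_const t).const_add 1).pow 2).add
    ((hasDerivAt_pow 2 s).const_mul q)
  exact h.congr_deriv (by simp [segmentInner]; ring)

lemma hasDerivAt_segmentInner (s : ℝ) : HasDerivAt (segmentInner t q) (t ^ 2 + q) s := by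
  have h := (((hasDerivAt_id' s).mul_const t).const_add 1).const_mul t |>.add
    ((hasDerivAt_id' s).const_mul q)
  exact h.congr_deriv (by ring)

-- Lagrange's identity: the determinant of `w` and `v(s)` is `-√q`.
lemma sq_segmentInner (s : ℝ) :
    segmentInner t q s ^ 2 = (t ^ 2 + q) * segmentNormSq t q s - q := by
  unfold segmentInner segmentNormSq; ring

lemma segmentNormSq_le_sq {r s : ℝ} (hq : 0 ≤ q) (hs : s ∈ Icc (0 : ℝ) 1)
    (hr : √(t ^ 2 + q) ≤ r) : segmentNormSq t q s ≤ (1 + r) ^ 2 := by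
  obtain ⟨hs0, hs1⟩ := hs
  have hr0 : 0 ≤ r := (sqrt_nonneg _).trans hr
  have ht : t ≤ r := (le_sqrt_of_sq_le (by linarith)).trans hr
  have hu : t ^ 2 + q ≤ r ^ 2 := (sqrt_le_left (by positivity)).1 hr
  have : segmentNormSq t q s = 1 + 2 * s * t + (t ^ 2 + q) * s ^ 2 := by
    unfold segmentNormSq; ring
  rw [this]
  have hs2 : s ^ 2 ≤ 1 := pow_le_one₀ hs0 hs1
  nlinarith [mul_le_mul_of_nonneg_left ht hs0, mul_le_mul_of_nonneg_right hu (sq_nonneg s),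
    mul_le_of_le_one_left hr0 hs1, mul_le_of_le_one_right (sq_nonneg r) hs2]

variable (p : ℝ)

lemma hasDerivAt_segmentNormSq_rpow (hq : 0 < q) (s : ℝ) :
    HasDerivAt (fun s => segmentNormSq t q s ^ (p / 2))
      (p * segmentInner t q s * segmentNormSq t q s ^ (p / 2 - 1)) s :=
  ((hasDerivAt_segmentNormSq t q s).rpow_const
    (Or.inl (segmentNormSq_pos t q hq s).ne')).congr_deriv (by ring)

lemma hasDerivAt_segmentInner_mul_rpow (hq : 0 < q) (s : ℝ) :
    HasDerivAt (fun s => p * segmentInner t q s * segmentNormSq t q s ^ (p / 2 - 1))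
      (p * segmentNormSq t q s ^ (p / 2 - 2) *
        ((p - 1) * (t ^ 2 + q) * segmentNormSq t q s + (2 - p) * q)) s := by
  have hB := (segmentNormSq_pos t q hq s).ne'
  have h := ((hasDerivAt_segmentInner t q s).const_mul p).mul
    ((hasDerivAt_segmentNormSq t q s).rpow_const (p := p / 2 - 1) (Or.inl hB))
  refine h.congr_deriv ?_
  rw [show p / 2 - 1 = p / 2 - 2 + 1 by ring, rpow_add_one hB,
    show p / 2 - 2 + 1 - 1 = p / 2 - 2 by ring]
  linear_combination
    (p * (p - 2) * segmentNormSq t q s ^ (p / 2 - 2)) * sq_segmentInner t q s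

end Segment

lemma mul_rpow_le_deriv2_segmentNormSq_rpow {p q r s : ℝ} (t : ℝ) (hp : 1 ≤ p) (hp2 : p ≤ 2)
    (hq : 0 < q) (hs : s ∈ Icc (0 : ℝ) 1) (hr : √(t ^ 2 + q) ≤ r) :
    p * (p - 1) * (1 + r) ^ (p - 2) * (t ^ 2 + q) ≤
      p * segmentNormSq t q s ^ (p / 2 - 2) *
        ((p - 1) * (t ^ 2 + q) * segmentNormSq t q s + (2 - p) * q) := by
  have hB := segmentNormSq_pos t q hq s
  have hr0 : 0 ≤ 1 + r := by linarith [(sqrt_nonneg _).trans hr]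
  have hmono : (1 + r) ^ (p - 2) ≤ segmentNormSq t q s ^ (p / 2 - 1) := by
    calc (1 + r) ^ (p - 2) = ((1 + r) ^ 2) ^ (p / 2 - 1) := by
          rw [← rpow_natCast, ← rpow_mul hr0]; norm_num; ring_nf
      _ ≤ segmentNormSq t q s ^ (p / 2 - 1) :=
          rpow_le_rpow_of_nonpos hB (segmentNormSq_le_sq t q hq.le hs hr) (by linarith)
  have hsplit : segmentNormSq t q s ^ (p / 2 - 1) =
      segmentNormSq t q s ^ (p / 2 - 2) * segmentNormSq t q s := by
    rw [← rpow_add_one hB.ne']; ring_nf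
  have hpos : 0 ≤ p * segmentNormSq t q s ^ (p / 2 - 2) * ((2 - p) * q) := by
    have := rpow_pos_of_pos hB (p / 2 - 2)
    have : 0 ≤ 2 - p := by linarith
    positivity
  calc p * (p - 1) * (1 + r) ^ (p - 2) * (t ^ 2 + q)
      ≤ p * (p - 1) * segmentNormSq t q s ^ (p / 2 - 1) * (t ^ 2 + q) := by
        have : 0 ≤ p - 1 := by linarith
        gcongr
    _ ≤ _ := by rw [hsplit]; linarith

lemma mul_le_rpow_sub_one_sub_mul_of_pos {p q r : ℝ} (t : ℝ) (hp : 1 ≤ p) (hp2 : p ≤ 2)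
    (hq : 0 < q) (hr : √(t ^ 2 + q) ≤ r) :
    p * (p - 1) * (1 + r) ^ (p - 2) / 2 * (t ^ 2 + q) ≤
      ((1 + t) ^ 2 + q) ^ (p / 2) - 1 - p * t := by
  have h := add_deriv_mul_add_le_of_le_deriv2 zero_le_one
    (fun s _ => hasDerivAt_segmentNormSq_rpow t q p hq s)
    (fun s _ => hasDerivAt_segmentInner_mul_rpow t q p hq s)
    (fun s hs => mul_rpow_le_deriv2_segmentNormSq_rpow t hp hp2 hq (Ioo_subset_Icc_self hs) hr)
  simp only [segmentNormSq, segmentInner] at h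
  norm_num at h
  linarith

-- For `q = 0` the segment may pass through the origin, where `‖·‖ ^ p` is not twice
-- differentiable; this case follows by letting `q` decrease to `0`.
lemma mul_le_rpow_sub_one_sub_mul {p q r : ℝ} (t : ℝ) (hp : 1 ≤ p) (hp2 : p ≤ 2)
    (hq : 0 ≤ q) (hr : √(t ^ 2 + q) < r) :
    p * (p - 1) * (1 + r) ^ (p - 2) / 2 * (t ^ 2 + q) ≤
      ((1 + t) ^ 2 + q) ^ (p / 2) - 1 - p * t := by
  have hlhs : ContinuousAt (fun q => p * (p - 1) * (1 + r) ^ (p - 2) / 2 * (t ^ 2 + q)) q := by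
    fun_prop
  have hrhs : ContinuousAt (fun q => ((1 + t) ^ 2 + q) ^ (p / 2) - 1 - p * t) q :=
    ((continuousAt_id.const_add _).rpow_const (Or.inr (by positivity))).sub_const _ |>.sub_const _
  have hnear : ∀ᶠ q' in 𝓝 q, √(t ^ 2 + q') < r :=
    (continuous_const.add continuous_id).sqrt.continuousAt.eventually_lt continuousAt_const hr
  refine le_of_tendsto_of_tendsto (hlhs.tendsto.mono_left (nhdsWithin_le_nhds (s := Ioi q)))
    (hrhs.tendsto.mono_left nhdsWithin_le_nhds) ?_
  filter_upwards [nhdsWithin_le_nhds hnear, self_mem_nhdsWithin] with q' hq' hqq'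
  exact mul_le_rpow_sub_one_sub_mul_of_pos t hp hp2 (hq.trans_lt hqq') hq'.le

noncomputable def vartheta (ε p : ℝ) : ℝ := √((1/2) * (((p-1)/(2*ε)) ^ (2/(2-p))) + 1/2) - 1

lemma two_mul_le_mul_one_add_vartheta_rpow {ε p : ℝ} (hp2 : p < 2) (hε : 0 < ε)
    (hε2 : ε ≤ (p - 1) / 2) : 2 * ε ≤ (p - 1) * (1 + vartheta ε p) ^ (p - 2) := by
  set c := (p - 1) / (2 * ε)
  have hc : 1 ≤ c := by rw [le_div_iff₀ (by positivity)]; linarith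
  set M := c ^ (2 / (2 - p))
  have hM : 1 ≤ M := one_le_rpow hc (div_nonneg zero_le_two (by linarith))
  have hA : 0 < 1 / 2 * M + 1 / 2 := by positivity
  have hsqrt : (1 + vartheta ε p) ^ (p - 2) = (1 / 2 * M + 1 / 2) ^ ((p - 2) / 2) := by
    rw [vartheta, add_sub_cancel, sqrt_eq_rpow, ← rpow_mul hA.le]; ring_nf
  have hMc : M ^ ((p - 2) / 2) = c⁻¹ := by
    rw [← rpow_mul (by positivity), ← rpow_neg_one]
    have : 2 - p ≠ 0 := by linarith
    congr 1
    field_simp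
    ring
  have hle : c⁻¹ ≤ (1 + vartheta ε p) ^ (p - 2) := by
    rw [hsqrt, ← hMc]
    exact rpow_le_rpow_of_nonpos hA (by linarith) (by linarith)
  calc 2 * ε = (p - 1) * c⁻¹ := by
        have : p - 1 ≠ 0 := by linarith
        simp only [c]; field_simp
    _ ≤ (p - 1) * (1 + vartheta ε p) ^ (p - 2) := by gcongr; linarith

theorem stmt6_general (p ε t tsq : ℝ) (hp : 1 < p) (hp2 : p < 2)
    (hε : 0 < ε) (hε2 : ε < (p - 1) / 2) (htsq : 0 ≤ tsq)
    (hsmall : Real.sqrt (t ^ 2 + tsq) <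
      Real.sqrt ((1/2) * (((p-1)/(2*ε)) ^ (2/(2-p))) + 1/2) - 1) :
    p * ε * (t ^ 2 + tsq) ≤ ((1 + t) ^ 2 + tsq) ^ (p / 2) - 1 - p * t := by
  have hθ := two_mul_le_mul_one_add_vartheta_rpow hp2 hε hε2.le
  calc p * ε * (t ^ 2 + tsq) = p * (2 * ε) / 2 * (t ^ 2 + tsq) := by ring
    _ ≤ p * ((p - 1) * (1 + vartheta ε p) ^ (p - 2)) / 2 * (t ^ 2 + tsq) := by gcongr
    _ ≤ _ := by
      rw [← mul_assoc]
      exact mul_le_rpow_sub_one_sub_mul t hp.le hp2.le htsq hsmall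

theorem stmt6 (p K ε t tsq : ℝ) (hp : 1 < p) (hp2 : p < 2) (hK : 0 ≤ K)
    (hε : 0 < ε) (hε2 : ε < (p - 1) / 2) (htsq : 0 ≤ tsq)
    (hsmall : Real.sqrt (t ^ 2 + tsq) <
      Real.sqrt ((1/2) * (((p-1)/(2*ε)) ^ (2/(2-p))) + 1/2) - 1) :
    p * ε * (t ^ 2 + tsq) ≤ ((1 + t) ^ 2 + tsq) ^ (p / 2) - 1 - p * t :=
  stmt6_general p ε t tsq hp hp2 hε hε2 htsq hsmall
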